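/- arXiv:2511.05338 — 10 statements merged into one kernel-verified Lean document; each statement's English description precedes it below -/
import Mathlib

section
/- Let n ≥ 2 be an integer and let p ∈ (0,1), δ ∈ (0,1), r ∈ ℝ. Set ξ = (1−δ(1−p))/(δp). Then ξ > 1, and the linear system in unknowns (V^1,…,V^n) ∈ ℝ^n given by V^k = (1−δ)c_k + δ(p·V^{k+1} + (1−p)·V^k) for k = 1,…,n−1, and V^n = (1−δ)r + δ(p·V^1 + (1−p)·V^n), where c_1 = 0 and c_k = r for 2 ≤ k ≤ n, has a unique solution, namely V^1 = r(ξ^{n−1}−1)/(ξ^n−1) and V^k = r(1 − (ξ−1)ξ^{k−2}/(ξ^n−1)) for k = 2,…,n. -/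
/-- The cyclic rotation system of the baseline (undesirable-task) model has a
unique solution, given in closed form.  Indices `1, …, n` are paper indices. -/
theorem stmt_0 (n : ℕ) (hn : 2 ≤ n) (p δ r : ℝ)
    (hp : p ∈ Set.Ioo (0 : ℝ) 1) (hδ : δ ∈ Set.Ioo (0 : ℝ) 1)
    (ξ : ℝ) (hξ : ξ = (1 - δ * (1 - p)) / (δ * p)) :
    1 < ξ ∧
    ∀ V : ℕ → ℝ,
      ((∀ k, 1 ≤ k → k ≤ n - 1 →
          V k = (1 - δ) * (if k = 1 then (0 : ℝ) else r)
              + δ * (p * V (k + 1) + (1 - p) * V k)) ∧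
        V n = (1 - δ) * r + δ * (p * V 1 + (1 - p) * V n))
      ↔ (V 1 = r * (ξ ^ (n - 1) - 1) / (ξ ^ n - 1) ∧
          ∀ k, 2 ≤ k → k ≤ n →
            V k = r * (1 - (ξ - 1) * ξ ^ (k - 2) / (ξ ^ n - 1))) := by
  obtain ⟨hp0, hp1⟩ := hp
  obtain ⟨hδ0, hδ1⟩ := hδ
  obtain ⟨m, rfl⟩ : ∃ m, n = m + 2 := ⟨n - 2, by omega⟩
  have hδp : 0 < δ * p := mul_pos hδ0 hp0
  have hξ1 : 1 < ξ := by
    rw [hξ, lt_div_iff₀ hδp]; nlinarith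
  have hkey : δ * p * ξ = 1 - δ * (1 - p) := by
    rw [hξ]; field_simp
  have hD : ξ ^ (m + 2) - 1 ≠ 0 :=
    sub_ne_zero.mpr (one_lt_pow₀ hξ1 (by omega)).ne'
  have e1 : m + 2 - 1 = m + 1 := rfl
  have key : ∀ x y c : ℝ,
      (x = (1 - δ) * c + δ * (p * y + (1 - p) * x)) ↔ (ξ * x = (ξ - 1) * c + y) := by
    intro x y c
    constructor
    · intro h
      have h2 : δ * p * (ξ * x) = δ * p * ((ξ - 1) * c + y) := by
        linear_combination h + (x - c) * hkey
      exact mul_left_cancel₀ (ne_of_gt hδp) h2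
    · intro h
      linear_combination (δ * p) * h - (x - c) * hkey
  refine ⟨hξ1, fun V => ⟨fun ⟨h1, h2⟩ => ?_, fun ⟨g1, g2⟩ => ?_⟩⟩
  · -- forward
    have hV2 : ξ * V 1 = V 2 := by
      have := (key (V 1) (V 2) (if 1 = 1 then (0 : ℝ) else r)).mp (h1 1 (by omega) (by omega))
      simpa using this
    have claim : ∀ j, j ≤ m → V (j + 2) - r = ξ ^ j * (V 2 - r) := by
      intro j
      induction j with
      | zero => intro _; simp
      | succ i ih =>
        intro hle
        have hstep : ξ * V (i + 2) = (ξ - 1) * r + V (i + 3) := by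
          have := (key (V (i + 2)) (V (i + 3)) (if i + 2 = 1 then (0 : ℝ) else r)).mp
            (h1 (i + 2) (by omega) (by omega))
          simpa using this
        have ih' := ih (by omega)
        rw [pow_succ]
        linear_combination ξ * ih' - hstep
    have hlast : ξ * V (m + 2) = (ξ - 1) * r + V 1 := (key _ _ _).mp h2
    have claimn := claim m le_rfl
    have hlin : V 1 * (ξ ^ (m + 2) - 1) = r * (ξ ^ (m + 1) - 1) := by
      linear_combination (-ξ) * claimn + hlast + (ξ ^ (m + 1)) * hV2
    have hV1 : V 1 = r * (ξ ^ (m + 2 - 1) - 1) / (ξ ^ (m + 2) - 1) := by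
      rw [e1, eq_div_iff hD]
      linear_combination hlin
    refine ⟨hV1, ?_⟩
    intro k hk2 hkn
    obtain ⟨j, rfl⟩ : ∃ j, k = j + 2 := ⟨k - 2, by omega⟩
    have cj := claim j (by omega)
    have e2 : j + 2 - 2 = j := by omega
    rw [e2]
    field_simp
    linear_combination (ξ ^ (m + 2) - 1) * cj - (ξ ^ (m + 2) - 1) * ξ ^ j * hV2
      + ξ ^ (j + 1) * hlin
  · -- backward
    rw [e1] at g1
    constructor
    · intro k hk1 hkn
      rcases Nat.eq_or_lt_of_le hk1 with rfl | h
      · -- k = 1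
        rw [key, if_pos rfl]
        have hk := g2 2 (by omega) (by omega)
        have e2 : 2 - 2 = 0 := by omega
        rw [e2, pow_zero] at hk
        rw [g1, hk]
        field_simp
        ring
      · obtain ⟨j, rfl⟩ : ∃ j, k = j + 2 := ⟨k - 2, by omega⟩
        rw [key]
        have hk := g2 (j + 2) (by omega) (by omega)
        have hk' := g2 (j + 3) (by omega) (by omega)
        have e2 : j + 2 - 2 = j := by omega
        have e3 : j + 3 - 2 = j + 1 := by omega
        rw [e2] at hk; rw [e3] at hk'
        rw [if_neg (by omega : ¬ j + 2 = 1), hk, hk']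
        field_simp
        ring
    · rw [key]
      have hk := g2 (m + 2) (by omega) (by omega)
      have e2 : m + 2 - 2 = m := by omega
      rw [e2] at hk
      rw [hk, g1]
      field_simp
      ring
end

section
/- Let n ≥ 2 be an integer and let p ∈ (0,1), δ ∈ (0,1), r > 0. Set ξ = (1−δ(1−p))/(δp) and define V^1 = r(ξ^{n−1}−1)/(ξ^n−1) and V^k = r(1 − (ξ−1)ξ^{k−2}/(ξ^n−1)) for k = 2,…,n. Then 0 < V^1 < V^n < V^{n−1} < ⋯ < V^3 < V^2 < r; that is, V^1 > 0, V^1 < V^n, V^{k+1} < V^k for each k = 2,…,n−1, and V^2 < r. -/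
/-!
Since `δ < 1`, the ratio `ξ` exceeds `1`. With `c = (ξ - 1) / (ξ ^ n - 1) > 0` one has
`V^k = r (1 - c ξ^(k-2))` for `k ≥ 2`, which is strictly decreasing in `k` and below `r`;
and `V^n - V^1 = r ξ^(n-2) (ξ - 1)^2 / (ξ^n - 1) > 0`.
-/

lemma one_lt_rotation_ratio {p δ : ℝ} (hp : 0 < p) (hδ₀ : 0 < δ) (hδ₁ : δ < 1) :
    1 < (1 - δ * (1 - p)) / (δ * p) := by
  rw [one_lt_div (by positivity)]
  linarith

lemma strictAnti_mul_one_sub_mul_pow {r c ξ : ℝ} (hr : 0 < r) (hc : 0 < c) (hξ : 1 < ξ) :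
    StrictAnti fun m : ℕ => r * (1 - c * ξ ^ m) := by
  intro a b hab
  dsimp only
  gcongr

lemma pow_succ_sub_one_div_lt_one_sub {ξ : ℝ} (hξ : 1 < ξ) (m : ℕ) :
    (ξ ^ (m + 1) - 1) / (ξ ^ (m + 2) - 1) < 1 - (ξ - 1) * ξ ^ m / (ξ ^ (m + 2) - 1) := by
  have hD : 0 < ξ ^ (m + 2) - 1 := sub_pos.2 (one_lt_pow₀ hξ (by omega))
  rw [one_sub_div hD.ne', div_lt_div_iff_of_pos_right hD]
  have hgap : 0 < ξ ^ m * (ξ - 1) ^ 2 :=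
    mul_pos (pow_pos (zero_lt_one.trans hξ) m) (pow_pos (sub_pos.2 hξ) 2)
  linear_combination hgap

/-- Ordering of the closed-form solution of the cyclic rotation system:
`0 < V¹ < Vⁿ < V^{n-1} < ⋯ < V³ < V² < r`. -/
theorem stmt_3 (n : ℕ) (hn : 2 ≤ n) (p δ r : ℝ)
    (hp : p ∈ Set.Ioo (0 : ℝ) 1) (hδ : δ ∈ Set.Ioo (0 : ℝ) 1) (hr : 0 < r)
    (ξ : ℝ) (hξ : ξ = (1 - δ * (1 - p)) / (δ * p))
    (V : ℕ → ℝ)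
    (hV1 : V 1 = r * (ξ ^ (n - 1) - 1) / (ξ ^ n - 1))
    (hVk : ∀ k, 2 ≤ k → k ≤ n →
        V k = r * (1 - (ξ - 1) * ξ ^ (k - 2) / (ξ ^ n - 1))) :
    0 < V 1 ∧ V 1 < V n ∧
    (∀ k, 2 ≤ k → k ≤ n - 1 → V (k + 1) < V k) ∧
    V 2 < r := by
  obtain ⟨m, rfl⟩ : ∃ m, n = m + 2 := ⟨n - 2, by omega⟩
  have hξ₁ : 1 < ξ := hξ ▸ one_lt_rotation_ratio hp.1 hδ.1 hδ.2
  have hD : 0 < ξ ^ (m + 2) - 1 := sub_pos.2 (one_lt_pow₀ hξ₁ (by omega))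
  set c := (ξ - 1) / (ξ ^ (m + 2) - 1)
  have hc : 0 < c := div_pos (sub_pos.2 hξ₁) hD
  have hVc : ∀ k, 2 ≤ k → k ≤ m + 2 → V k = r * (1 - c * ξ ^ (k - 2)) := by
    intro k hk₂ hkn
    rw [hVk k hk₂ hkn, mul_div_right_comm]
  refine ⟨?_, ?_, ?_, ?_⟩
  · rw [hV1]
    exact div_pos (mul_pos hr (sub_pos.2 (one_lt_pow₀ hξ₁ (by omega)))) hD
  · rw [hV1, hVk _ (by omega) le_rfl, mul_div_assoc,
    show m + 2 - 1 = m + 1 by omega, Nat.add_sub_cancel]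
    exact mul_lt_mul_of_pos_left (pow_succ_sub_one_div_lt_one_sub hξ₁ m) hr
  · intro k hk₂ hkn
    rw [hVc (k + 1) (by omega) (by omega), hVc k hk₂ (by omega)]
    exact strictAnti_mul_one_sub_mul_pow hr hc hξ₁ (show k - 2 < k + 1 - 2 by omega)
  · rw [hVc 2 le_rfl (by omega), Nat.sub_self, pow_zero, mul_one]
    exact mul_lt_of_lt_one_right hr (sub_lt_self 1 hc)
end

section
/- Let p ∈ (0,1), δ ∈ (0,1), r > 0, and set ξ = (1−δ(1−p))/(δp). Define Δ(n) = r(ξ−1)(ξ^{n−1}−1)/(ξ^n−1) for integers n ≥ 2. Then Δ is strictly increasing in n: Δ(n+1) > Δ(n) for every n ≥ 2. Equivalently, (ξ^n−1)/(ξ^{n+1}−1) > (ξ^{n−1}−1)/(ξ^n−1) for every real ξ > 1 and every integer n ≥ 2. -/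
lemma key_ratio (ζ : ℝ) (hζ : 1 < ζ) (n : ℕ) (hn : 2 ≤ n) :
    (ζ ^ (n - 1) - 1) / (ζ ^ n - 1) < (ζ ^ n - 1) / (ζ ^ (n + 1) - 1) := by
  have h0 : (0:ℝ) < ζ := by linarith
  have hpow : ∀ m : ℕ, 1 ≤ m → 1 < ζ ^ m := fun m hm => one_lt_pow₀ hζ (by omega)
  have h1 : (0:ℝ) < ζ ^ n - 1 := by have := hpow n (by omega); linarith
  have h2 : (0:ℝ) < ζ ^ (n+1) - 1 := by have := hpow (n+1) (by omega); linarith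
  rw [div_lt_div_iff₀ h1 h2]
  obtain ⟨m, rfl⟩ : ∃ m, n = m + 1 := ⟨n - 1, by omega⟩
  simp only [Nat.add_sub_cancel]
  have hpm : (0:ℝ) < ζ ^ m := pow_pos h0 m
  have expand : (ζ ^ (m+1) - 1) * (ζ ^ (m+1) - 1) - (ζ ^ m - 1) * (ζ ^ (m+1+1) - 1)
      = ζ ^ m * (ζ - 1)^2 := by ring
  nlinarith [mul_pos hpm (pow_pos (show (0:ℝ) < ζ - 1 by linarith) 2)]

/-- The incentive gap `Δ(n) = r(ξ−1)(ξ^{n−1}−1)/(ξ^n−1)` is strictly increasing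
in the number of workers `n`; equivalently,
`(ξ^n−1)/(ξ^{n+1}−1) > (ξ^{n−1}−1)/(ξ^n−1)` for every real `ξ > 1`. -/
theorem stmt_4 (p δ r : ℝ)
    (hp : p ∈ Set.Ioo (0 : ℝ) 1) (hδ : δ ∈ Set.Ioo (0 : ℝ) 1) (hr : 0 < r)
    (ξ : ℝ) (hξ : ξ = (1 - δ * (1 - p)) / (δ * p))
    (Δ : ℕ → ℝ)
    (hΔ : ∀ n, 2 ≤ n → Δ n = r * (ξ - 1) * (ξ ^ (n - 1) - 1) / (ξ ^ n - 1)) :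
    (∀ n : ℕ, 2 ≤ n → Δ n < Δ (n + 1)) ∧
    (∀ ζ : ℝ, 1 < ζ → ∀ n : ℕ, 2 ≤ n →
      (ζ ^ (n - 1) - 1) / (ζ ^ n - 1) < (ζ ^ n - 1) / (ζ ^ (n + 1) - 1)) := by
  obtain ⟨hp0, hp1⟩ := hp
  obtain ⟨hδ0, hδ1⟩ := hδ
  have hδp : 0 < δ * p := mul_pos hδ0 hp0
  have hξ1 : 1 < ξ := by
    rw [hξ, lt_div_iff₀ hδp]; nlinarith
  constructor
  · intro n hn
    have key := key_ratio ξ hξ1 n hn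
    rw [hΔ n hn, hΔ (n+1) (by omega)]
    have : (n + 1) - 1 = n := by omega
    rw [this]
    have hc : 0 < r * (ξ - 1) := by nlinarith
    rw [mul_div_assoc, mul_div_assoc]
    exact mul_lt_mul_of_pos_left key hc
  · exact fun ζ hζ n hn => key_ratio ζ hζ n hn
end

section
/- Let p ∈ (0,1), q ∈ (0,p), δ ∈ (0,1), r > 0, s > 0, and set ξ = (1−δ(1−p))/(δp). For integers n ≥ 2 define Δ(n) = r(ξ−1)(ξ^{n−1}−1)/(ξ^n−1). If Δ(n) ≥ (1−δ)s/(δ(p−q)) for some n ≥ 2, then Δ(m) > (1−δ)s/(δ(p−q)) for every integer m > n. -/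
/-- If the efficiency condition `Δ(n) ≥ (1−δ)s/(δ(p−q))` holds for some `n ≥ 2`,
then it holds strictly for every larger number of workers `m > n`. -/
theorem stmt_5 (p q δ r s : ℝ)
    (hp : p ∈ Set.Ioo (0 : ℝ) 1) (hq : 0 < q) (hqp : q < p)
    (hδ : δ ∈ Set.Ioo (0 : ℝ) 1) (hr : 0 < r) (hs : 0 < s)
    (ξ : ℝ) (hξ : ξ = (1 - δ * (1 - p)) / (δ * p))
    (Δ : ℕ → ℝ)
    (hΔ : ∀ n, 2 ≤ n → Δ n = r * (ξ - 1) * (ξ ^ (n - 1) - 1) / (ξ ^ n - 1))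
    (n : ℕ) (hn : 2 ≤ n)
    (heff : (1 - δ) * s / (δ * (p - q)) ≤ Δ n) :
    ∀ m : ℕ, n < m → (1 - δ) * s / (δ * (p - q)) < Δ m := by
  obtain ⟨hp0, hp1⟩ := hp
  obtain ⟨hδ0, hδ1⟩ := hδ
  have hξ1 : 1 < ξ := by
    rw [hξ, lt_div_iff₀ (by positivity)]
    nlinarith
  have hpow : ∀ k : ℕ, 1 ≤ k → 1 < ξ ^ k := by
    intro k hk
    calc (1:ℝ) = 1 ^ k := (one_pow k).symm
    _ < ξ ^ k := by
      apply pow_lt_pow_left₀ hξ1 zero_le_one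
      omega
  have hstep : ∀ k, 2 ≤ k → Δ k < Δ (k + 1) := by
    intro k hk
    rw [hΔ k hk, hΔ (k + 1) (by omega)]
    have e2 : k + 1 - 1 = k := rfl
    rw [e2]
    have ha : (1:ℝ) < ξ ^ (k - 1) := hpow _ (by omega)
    have e1 : k - 1 + 1 = k := by omega
    have hk1 : ξ ^ k = ξ ^ (k - 1) * ξ := by rw [← pow_succ, e1]
    have hk2 : ξ ^ (k + 1) = ξ ^ (k - 1) * ξ * ξ := by
      rw [← pow_succ, ← pow_succ, e1]
    have hd1 : (0:ℝ) < ξ ^ k - 1 := by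
      have := hpow k (by omega); linarith
    have hd2 : (0:ℝ) < ξ ^ (k + 1) - 1 := by
      have := hpow (k + 1) (by omega); linarith
    rw [div_lt_div_iff₀ hd1 hd2, hk1, hk2]
    have hrξ : 0 < r * (ξ - 1) := by nlinarith
    have ha0 : (0:ℝ) < ξ ^ (k - 1) := lt_trans zero_lt_one ha
    nlinarith [mul_pos hrξ (mul_pos ha0
      (mul_pos (sub_pos.mpr hξ1) (sub_pos.mpr hξ1)))]
  have hmono : ∀ m : ℕ, n < m → Δ n < Δ m := by
    intro m hm
    induction m with
    | zero => omega
    | succ m ih =>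
      rcases Nat.lt_or_ge n m with h | h
      · exact lt_trans (ih h) (hstep m (by omega))
      · have : m = n := by omega
        subst this
        exact hstep m hn
  intro m hm
  exact lt_of_le_of_lt heff (hmono m hm)
end

section
/- Let n ≥ 2 be an integer, let p ∈ (0,1), δ ∈ (0,1), and r > 0. For α ∈ (0,1] set ξ_α = (1−δ(1−αp))/(δαp) and define f(α) = α·r·(ξ_α−1)(ξ_α^{n−1}−1)/(ξ_α^n−1). Then f is strictly increasing on (0,1]: for all 0 < α < α′ ≤ 1, f(α) < f(α′). -/
private lemma key_poly (m : ℕ) (hm : 1 ≤ m) (a b : ℝ) (ha : 1 < a) (hab : a < b) :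
    (b ^ m - 1) * (a ^ (m + 1) - 1) < (a ^ m - 1) * (b ^ (m + 1) - 1) := by
  have hb : 1 < b := ha.trans hab
  have ha0 : (0:ℝ) < a := by linarith
  have hb0 : (0:ℝ) < b := by linarith
  set T : ℝ := ∑ i ∈ Finset.range m, a ^ i with hT
  set S : ℝ := ∑ i ∈ Finset.range m, b ^ i * a ^ (m - 1 - i) with hSdef
  have hgeoT : T * (a - 1) = a ^ m - 1 := geom_sum_mul a m
  have hS : S * (b - a) = b ^ m - a ^ m := geom_sum₂_mul b a m
  have hS1 := geom_sum₂_mul b a (m + 1)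
  simp only [Nat.add_sub_cancel] at hS1
  have hsplit : (∑ i ∈ Finset.range (m + 1), b ^ i * a ^ (m - i)) = b ^ m + a * S := by
    rw [Finset.sum_range_succ]
    have h2 : ∑ i ∈ Finset.range m, b ^ i * a ^ (m - i) = a * S := by
      rw [hSdef, Finset.mul_sum]
      apply Finset.sum_congr rfl
      intro i hi
      have hi' : i < m := Finset.mem_range.mp hi
      have : m - i = (m - 1 - i) + 1 := by omega
      rw [this, pow_succ]; ring
    rw [h2, Nat.sub_self, pow_zero, mul_one]; ring
  rw [hsplit] at hS1
  have hpos : 0 < b ^ m * T - S := by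
    have heq : b ^ m * T - S
        = ∑ i ∈ Finset.range m, (b ^ m * a ^ i - b ^ i * a ^ (m - 1 - i)) := by
      rw [hT, hSdef, Finset.mul_sum, ← Finset.sum_sub_distrib]
    rw [heq]
    apply Finset.sum_pos
    · intro i hi
      have hi' : i < m := Finset.mem_range.mp hi
      have h1 : b ^ i * a ^ (m - 1 - i) ≤ b ^ i * b ^ (m - 1 - i) :=
        mul_le_mul_of_nonneg_left (pow_le_pow_left₀ ha0.le hab.le _) (pow_nonneg hb0.le i)
      have h2 : b ^ i * b ^ (m - 1 - i) = b ^ (m - 1) := by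
        rw [← pow_add]; congr 1; omega
      have h3 : b ^ (m - 1) < b ^ m := by
        apply pow_lt_pow_right₀ hb; omega
      have h4 : b ^ m ≤ b ^ m * a ^ i :=
        le_mul_of_one_le_right (pow_pos hb0 m).le (one_le_pow₀ ha.le)
      linarith
    · exact Finset.nonempty_range_iff.mpr (by omega)
  have hD : (a ^ m - 1) * (b ^ (m + 1) - 1) - (b ^ m - 1) * (a ^ (m + 1) - 1)
      = (b - a) * ((a - 1) * (b ^ m * T - S)) := by
    linear_combination hS1 - hS - (b - a) * b ^ m * hgeoT
  have hDpos : 0 < (b - a) * ((a - 1) * (b ^ m * T - S)) :=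
    mul_pos (by linarith) (mul_pos (by linarith) hpos)
  linarith [hD, hDpos]

/-- The effort incentive gap `f(α) = α (V²(n,αp,r,δ) − V¹(n,αp,r,δ))` under an
`α`-rotating selection rule is strictly increasing in `α` on `(0,1]`. -/
theorem stmt_10 (n : ℕ) (hn : 2 ≤ n) (p δ r : ℝ)
    (hp : p ∈ Set.Ioo (0 : ℝ) 1) (hδ : δ ∈ Set.Ioo (0 : ℝ) 1) (hr : 0 < r)
    (ξ : ℝ → ℝ) (hξ : ∀ α, ξ α = (1 - δ * (1 - α * p)) / (δ * (α * p)))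
    (f : ℝ → ℝ)
    (hf : ∀ α, f α = α * r * (ξ α - 1) * ((ξ α) ^ (n - 1) - 1) / ((ξ α) ^ n - 1)) :
    ∀ α α' : ℝ, 0 < α → α < α' → α' ≤ 1 → f α < f α' := by
  obtain ⟨hp0, hp1⟩ := hp
  obtain ⟨hδ0, hδ1⟩ := hδ
  intro α α' hα hαα' hα1
  have hα' : 0 < α' := hα.trans hαα'
  have hδp : 0 < δ * p := mul_pos hδ0 hp0
  have hxi : ∀ β : ℝ, 0 < β → ξ β - 1 = (1 - δ) / (δ * (β * p)) := by
    intro β hβ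
    rw [hξ]
    rw [div_sub_one (by positivity)]
    congr 1
    ring
  have ha1 : 1 < ξ α' := by
    have h := hxi α' hα'
    have hpos : 0 < (1 - δ) / (δ * (α' * p)) := by
      apply div_pos (by linarith) (by positivity)
    linarith
  have hb1 : 1 < ξ α := by
    have h := hxi α hα
    have hpos : 0 < (1 - δ) / (δ * (α * p)) := by
      apply div_pos (by linarith) (by positivity)
    linarith
  have hab : ξ α' < ξ α := by
    have h1 := hxi α hα
    have h2 := hxi α' hα'
    have h3 : (1 - δ) / (δ * (α' * p)) < (1 - δ) / (δ * (α * p)) := by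
      apply div_lt_div_of_pos_left (by linarith) (by positivity)
      have : δ * (α * p) < δ * (α' * p) := by
        apply mul_lt_mul_of_pos_left _ hδ0
        exact mul_lt_mul_of_pos_right hαα' hp0
      linarith
    linarith
  have hc : ∀ β : ℝ, 0 < β → β * r * (ξ β - 1) = r * (1 - δ) / (δ * p) := by
    intro β hβ
    rw [hxi β hβ]
    field_simp
  set c : ℝ := r * (1 - δ) / (δ * p) with hcdef
  have hc0 : 0 < c := div_pos (mul_pos hr (by linarith)) hδp
  obtain ⟨m, hm⟩ : ∃ m, n = m + 1 := ⟨n - 1, by omega⟩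
  have hm1 : 1 ≤ m := by omega
  have hkey := key_poly m hm1 (ξ α') (ξ α) ha1 hab
  have hda : 0 < (ξ α') ^ n - 1 := sub_pos.mpr (one_lt_pow₀ ha1 (by omega))
  have hdb : 0 < (ξ α) ^ n - 1 := sub_pos.mpr (one_lt_pow₀ hb1 (by omega))
  rw [hf α, hf α', hc α hα, hc α' hα', mul_div_assoc, mul_div_assoc]
  apply mul_lt_mul_of_pos_left _ hc0
  rw [div_lt_div_iff₀ hdb hda]
  have hnm : n - 1 = m := by omega
  rw [hnm, hm] at *
  exact hkey
end

section
/- Let n ≥ 2 be an integer, let 0 < q < p < 1, δ ∈ (0,1), r > 0, and s > 0. For α ∈ (0,1] set ξ_α = (1−δ(1−αp))/(δαp) and f(α) = α·r·(ξ_α−1)(ξ_α^{n−1}−1)/(ξ_α^n−1). If f(1) ≥ (1−δ)s/(δ(p−q)), then there exists a unique α* ∈ (0,1] such that f(α*) = (1−δ)s/(δ(p−q)). -/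
open Finset

private lemma sum_lt_aux (m : ℕ) (hm : 1 ≤ m) {x y : ℝ} (hx : 1 < x) (hxy : x < y) :
    (∑ i ∈ range m, y ^ i * x ^ (m - 1 - i)) < y ^ m * ∑ i ∈ range m, x ^ i := by
  have hy : 1 < y := hx.trans hxy
  have hx0 : (0:ℝ) < x := lt_trans one_pos hx
  calc (∑ i ∈ range m, y ^ i * x ^ (m - 1 - i))
      < ∑ i ∈ range m, y ^ m * x ^ (m - 1 - i) := by
        apply Finset.sum_lt_sum_of_nonempty (Finset.nonempty_range_iff.mpr (by omega))
        intro i hi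
        have hiy : y ^ i < y ^ m := pow_lt_pow_right₀ hy (mem_range.mp hi)
        exact mul_lt_mul_of_pos_right hiy (by positivity)
    _ = y ^ m * ∑ i ∈ range m, x ^ i := by
        rw [Finset.mul_sum, ← Finset.sum_range_reflect (fun i => y ^ m * x ^ i) m]

private lemma key_ineq (n : ℕ) (hn : 2 ≤ n) {x y : ℝ} (hx : 1 < x) (hxy : x < y) :
    (y ^ (n-1) - 1) * (x ^ n - 1) < (x ^ (n-1) - 1) * (y ^ n - 1) := by
  obtain ⟨m, rfl⟩ : ∃ m, n = m + 1 := ⟨n - 1, by omega⟩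
  have hm : 1 ≤ m := by omega
  simp only [Nat.add_sub_cancel]
  set S : ℝ := ∑ i ∈ range m, x ^ i with hS
  set G : ℝ := ∑ i ∈ range m, y ^ i * x ^ (m - 1 - i) with hG
  have h1 : S * (x - 1) = x ^ m - 1 := geom_sum_mul x m
  have h2 : G * (y - x) = y ^ m - x ^ m := geom_sum₂_mul y x m
  have hGG : (∑ i ∈ range (m+1), y ^ i * x ^ (m - i)) = y ^ m + x * G := by
    rw [Finset.sum_range_succ, hG, Finset.mul_sum]
    rw [Finset.sum_congr rfl (fun i hi => ?_), Nat.sub_self, pow_zero, mul_one, add_comm]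
    have : m - i = (m - 1 - i) + 1 := by have := mem_range.mp hi; omega
    rw [this, pow_succ]; ring
  have h3 : (y ^ m + x * G) * (y - x) = y ^ (m+1) - x ^ (m+1) := by
    rw [← hGG]
    have := geom_sum₂_mul y x (m+1)
    simpa using this
  have hpos : G < y ^ m * S := sum_lt_aux m hm hx hxy
  have hid : (x ^ m - 1) * (y ^ (m+1) - 1) - (y ^ m - 1) * (x ^ (m+1) - 1)
      = (y - x) * (x - 1) * (y ^ m * S - G) := by
    linear_combination -(y - x) * y ^ m * h1 - h2 + h3
  nlinarith [mul_pos (mul_pos (sub_pos.mpr hxy) (sub_pos.mpr hx)) (sub_pos.mpr hpos)]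


/-- If the efficiency condition `f(1) ≥ (1−δ)s/(δ(p−q))` holds, then there is a
unique `α* ∈ (0,1]` at which the incentive constraint binds:
`f(α*) = (1−δ)s/(δ(p−q))`. -/
theorem stmt_11 (n : ℕ) (hn : 2 ≤ n) (p q δ r s : ℝ)
    (hq : 0 < q) (hqp : q < p) (hp : p < 1)
    (hδ : δ ∈ Set.Ioo (0 : ℝ) 1) (hr : 0 < r) (hs : 0 < s)
    (ξ : ℝ → ℝ) (hξ : ∀ α, ξ α = (1 - δ * (1 - α * p)) / (δ * (α * p)))
    (f : ℝ → ℝ)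
    (hf : ∀ α, f α = α * r * (ξ α - 1) * ((ξ α) ^ (n - 1) - 1) / ((ξ α) ^ n - 1))
    (heff : (1 - δ) * s / (δ * (p - q)) ≤ f 1) :
    ∃! α : ℝ, α ∈ Set.Ioc (0 : ℝ) 1 ∧ f α = (1 - δ) * s / (δ * (p - q)) := by
  obtain ⟨hδ0, hδ1⟩ := hδ
  have hp0 : 0 < p := lt_trans hq hqp
  set c : ℝ := (1 - δ) / (δ * p) with hc_def
  have hc : 0 < c := div_pos (by linarith) (by positivity)
  -- ξ α = 1 + c / α for α > 0
  have hξ' : ∀ α : ℝ, 0 < α → ξ α = 1 + c / α := by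
    intro α hα
    rw [hξ, hc_def]
    field_simp
    ring
  have hξgt : ∀ α : ℝ, 0 < α → 1 < ξ α := by
    intro α hα
    rw [hξ' α hα]
    have : 0 < c / α := div_pos hc hα
    linarith
  have hn1 : n - 1 ≠ 0 := by omega
  have hn0 : n ≠ 0 := by omega
  -- f α = r * c * ((ξ α)^(n-1) - 1) / ((ξ α)^n - 1) for α > 0
  have hfc : ∀ α : ℝ, 0 < α →
      f α = r * c * ((ξ α) ^ (n-1) - 1) / ((ξ α) ^ n - 1) := by
    intro α hα
    rw [hf]
    have h : α * r * (ξ α - 1) = r * c := by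
      rw [hξ' α hα]
      field_simp
      ring
    rw [h]
  -- strict monotonicity of f on (0, ∞)
  have hmono : ∀ a b : ℝ, 0 < a → a < b → f a < f b := by
    intro a b ha hab
    have hb : 0 < b := lt_trans ha hab
    have hlt : ξ b < ξ a := by
      rw [hξ' a ha, hξ' b hb]
      have : c / b < c / a := div_lt_div_of_pos_left hc ha hab
      linarith
    have hxb : 1 < ξ b := hξgt b hb
    have hkey := key_ineq n hn hxb hlt
    have hYa : 0 < (ξ a) ^ n - 1 := sub_pos.mpr (one_lt_pow₀ (hξgt a ha) hn0)
    have hYb : 0 < (ξ b) ^ n - 1 := sub_pos.mpr (one_lt_pow₀ hxb hn0)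
    rw [hfc a ha, hfc b hb, div_lt_div_iff₀ hYa hYb]
    nlinarith [mul_pos hr hc]
  -- upper bound : f α < r * α
  have hub : ∀ α : ℝ, 0 < α → f α < r * α := by
    intro α hα
    have hx : 1 < ξ α := hξgt α hα
    have hY : 0 < (ξ α) ^ n - 1 := sub_pos.mpr (one_lt_pow₀ hx hn0)
    have hX1 : 1 < (ξ α) ^ (n-1) := one_lt_pow₀ hx hn1
    have hpow : (ξ α) ^ (n-1) * ξ α = (ξ α) ^ n := by
      rw [← pow_succ]
      congr 1
      omega
    have hlt : ((ξ α) ^ (n-1) - 1) / ((ξ α) ^ n - 1) < 1 / (ξ α - 1) := by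
      rw [div_lt_div_iff₀ hY (by linarith)]
      nlinarith
    have hxi : ξ α - 1 = c / α := by rw [hξ' α hα]; ring
    have h1 : 1 / (ξ α - 1) = α / c := by
      rw [hxi, one_div_div]
    calc f α = r * c * (((ξ α) ^ (n-1) - 1) / ((ξ α) ^ n - 1)) := by
            rw [hfc α hα, mul_div_assoc]
      _ < r * c * (1 / (ξ α - 1)) := by
            apply mul_lt_mul_of_pos_left hlt (by positivity)
      _ = r * α := by rw [h1]; field_simp
  set T : ℝ := (1 - δ) * s / (δ * (p - q)) with hT_def
  have hpq : 0 < p - q := sub_pos.mpr hqp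
  have hT : 0 < T := by
    rw [hT_def]
    exact div_pos (by nlinarith) (by positivity)
  -- f 1 < r, so T < r
  have hf1 : f 1 < r := by
    have := hub 1 one_pos
    linarith
  have hTr : T < r := lt_of_le_of_lt heff hf1
  set a : ℝ := T / (2 * r) with ha_def
  have ha0 : 0 < a := by positivity
  have ha1 : a < 1 := by
    rw [ha_def, div_lt_one (by positivity)]
    linarith
  have hfa : f a < T := by
    have := hub a ha0
    have : r * a = T / 2 := by rw [ha_def]; field_simp
    have h2 := hub a ha0
    linarith
  -- continuity on [a, 1]
  set F : ℝ → ℝ := fun α => r * c * ((1 + c / α) ^ (n-1) - 1) / ((1 + c / α) ^ n - 1) with hF_def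
  have hFf : ∀ α ∈ Set.Icc a 1, F α = f α := by
    intro α hα
    have hα0 : 0 < α := lt_of_lt_of_le ha0 hα.1
    rw [hfc α hα0, hξ' α hα0]
  have hcont : ContinuousOn F (Set.Icc a 1) := by
    have hne : ∀ α ∈ Set.Icc a 1, α ≠ 0 := fun α hα => ne_of_gt (lt_of_lt_of_le ha0 hα.1)
    have hbase : ContinuousOn (fun α : ℝ => 1 + c / α) (Set.Icc a 1) :=
      continuousOn_const.add (continuousOn_const.div continuousOn_id hne)
    apply ContinuousOn.div
    · exact continuousOn_const.mul ((hbase.pow _).sub continuousOn_const)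
    · exact (hbase.pow _).sub continuousOn_const
    · intro α hα
      have hα0 : 0 < α := lt_of_lt_of_le ha0 hα.1
      have : 1 < 1 + c / α := by have : 0 < c / α := div_pos hc hα0; linarith
      have := one_lt_pow₀ this hn0
      intro h
      rw [sub_eq_zero] at h
      linarith [h ▸ this]
  have hsub : Set.Icc (F a) (F 1) ⊆ F '' Set.Icc a 1 :=
    intermediate_value_Icc (le_of_lt ha1) hcont
  have hmem : T ∈ Set.Icc (F a) (F 1) := by
    constructor
    · rw [hFf a ⟨le_refl a, le_of_lt ha1⟩]; exact le_of_lt hfa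
    · rw [hFf 1 ⟨le_of_lt ha1, le_refl 1⟩]; exact heff
  obtain ⟨α, hαmem, hFα⟩ := hsub hmem
  have hα0 : 0 < α := lt_of_lt_of_le ha0 hαmem.1
  have hfα : f α = T := by rw [← hFf α hαmem]; exact hFα
  refine ⟨α, ⟨⟨hα0, hαmem.2⟩, hfα⟩, ?_⟩
  rintro b ⟨⟨hb0, hb1⟩, hfb⟩
  rcases lt_trichotomy b α with h | h | h
  · exact absurd (hmono b α hb0 h) (by rw [hfb, hfα]; exact lt_irrefl T)
  · exact h
  · exact absurd (hmono α b hα0 h) (by rw [hfb, hfα]; exact lt_irrefl T)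
end

section
/- Let n ≥ 2 be an integer and let p ∈ (0,1), δ ∈ (0,1), r ∈ ℝ. Set ξ = (1−δp)/(δ(1−p)). Then ξ > 1, and the linear system in unknowns (V^1,…,V^n) ∈ ℝ^n given by V^k = (1−δ)c_k + δ(p·V^k + (1−p)·V^{k+1}) for k = 1,…,n−1, and V^n = (1−δ)r + δ(p·V^n + (1−p)·V^1), where c_1 = 0 and c_k = r for 2 ≤ k ≤ n, has a unique solution, namely V^1 = r(ξ^{n−1}−1)/(ξ^n−1) and V^k = r(1 − (ξ−1)ξ^{k−2}/(ξ^n−1)) for k = 2,…,n. -/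
/-!
Solving the `k`-th equation for `V^{k+1}` gives `V^{k+1} - c_k = ξ (V^k - c_k)`, so the system is a
cyclic affine recursion with ratio `ξ`. Going once around the cycle from `V^1` yields the scalar
equation `V^1 - r = ξ^{n-1} (ξ V^1 - r)`, which has exactly one solution because `ξ^n ≠ 1`; the
remaining values are then read off the recursion `V^k - r = ξ^{k-2} (ξ V^1 - r)`.
-/

open Set

lemma one_lt_one_sub_mul_div_mul_one_sub {K : Type*} [Field K] [LinearOrder K]
    [IsStrictOrderedRing K] {p δ : K} (hp : p ∈ Ioo 0 1) (hδ : δ ∈ Ioo 0 1) :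
    1 < (1 - δ * p) / (δ * (1 - p)) := by
  obtain ⟨hp0, hp1⟩ := hp
  obtain ⟨hδ0, hδ1⟩ := hδ
  rw [one_lt_div (mul_pos hδ0 (sub_pos.mpr hp1))]
  nlinarith

section Recursion

variable {K : Type*} [Field K]

lemma bellman_eq_iff {p δ ξ c x y : K} (hB : δ * (1 - p) ≠ 0)
    (hξ : ξ * (δ * (1 - p)) = 1 - δ * p) :
    x = (1 - δ) * c + δ * (p * x + (1 - p) * y) ↔ y - c = ξ * (x - c) := by
  constructor <;> intro h
  · refine mul_left_cancel₀ hB ?_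
    linear_combination -h + (c - x) * hξ
  · linear_combination -(δ * (1 - p)) * h - (x - c) * hξ

lemma pow_mul_of_forall_succ_eq_mul {M : Type*} [Monoid M] {u : ℕ → M} {a : M} {m j : ℕ}
    (h : ∀ i < j, u (m + i + 1) = a * u (m + i)) : u (m + j) = a ^ j * u m := by
  induction j with
  | zero => simp
  | succ j ih =>
    rw [← add_assoc, h j j.lt_succ_self, ih fun i hi => h i (hi.trans j.lt_succ_self),
      pow_succ', mul_assoc]

variable {n : ℕ} {ξ r : K} {V : ℕ → K}

lemma rotation_values_of_system (hn : 2 ≤ n) (hξn : ξ ^ n ≠ 1)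
    (hstep : ∀ k, 1 ≤ k → k ≤ n - 1 →
      V (k + 1) - (if k = 1 then 0 else r) = ξ * (V k - (if k = 1 then 0 else r)))
    (hcyc : V 1 - r = ξ * (V n - r)) :
    V 1 = r * (ξ ^ (n - 1) - 1) / (ξ ^ n - 1) ∧
      ∀ k, 2 ≤ k → k ≤ n → V k = r * (1 - (ξ - 1) * ξ ^ (k - 2) / (ξ ^ n - 1)) := by
  obtain ⟨m, rfl⟩ := Nat.exists_eq_add_of_le hn
  have hD : ξ ^ (2 + m) - 1 ≠ 0 := sub_ne_zero.mpr hξn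
  have hchain : ∀ j ≤ m, V (2 + j) - r = ξ ^ j * (ξ * V 1 - r) := by
    intro j hj
    have h1 := hstep 1 le_rfl (by omega)
    simp only [if_pos, sub_zero] at h1
    rw [pow_mul_of_forall_succ_eq_mul (u := fun k => V k - r) fun i hi => ?_, h1]
    simpa [show 2 + i ≠ 1 by omega] using hstep (2 + i) (by omega) (by omega)
  have hV1 : V 1 = r * (ξ ^ (1 + m) - 1) / (ξ ^ (2 + m) - 1) := by
    rw [eq_div_iff hD]
    linear_combination -hcyc - ξ * hchain m le_rfl
  refine ⟨by simpa using hV1, fun k hk2 hk => ?_⟩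
  obtain ⟨j, rfl⟩ := Nat.exists_eq_add_of_le hk2
  rw [Nat.add_sub_cancel_left, ← sub_add_cancel (V (2 + j)) r, hchain j (by omega), hV1]
  field_simp
  ring

lemma system_of_rotation_values (hn : 2 ≤ n) (hξn : ξ ^ n ≠ 1)
    (hV1 : V 1 = r * (ξ ^ (n - 1) - 1) / (ξ ^ n - 1))
    (hVk : ∀ k, 2 ≤ k → k ≤ n → V k = r * (1 - (ξ - 1) * ξ ^ (k - 2) / (ξ ^ n - 1))) :
    (∀ k, 1 ≤ k → k ≤ n - 1 →
      V (k + 1) - (if k = 1 then 0 else r) = ξ * (V k - (if k = 1 then 0 else r))) ∧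
      V 1 - r = ξ * (V n - r) := by
  obtain ⟨m, rfl⟩ := Nat.exists_eq_add_of_le hn
  have hD : ξ ^ (2 + m) - 1 ≠ 0 := sub_ne_zero.mpr hξn
  have hV : ∀ j ≤ m, V (2 + j) = r * (1 - (ξ - 1) * ξ ^ j / (ξ ^ (2 + m) - 1)) :=
    fun j hj => by simpa using hVk (2 + j) (by omega) (by omega)
  simp only [show 2 + m - 1 = 1 + m by omega] at hV1 ⊢
  refine ⟨fun k hk1 hk => ?_, ?_⟩
  · rcases eq_or_lt_of_le hk1 with rfl | hk2
    · simp only [if_pos, sub_zero]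
      rw [hV 0 (by omega), hV1]
      field_simp
      ring
    · obtain ⟨j, rfl⟩ := Nat.exists_eq_add_of_le (hk2 : 2 ≤ k)
      rw [if_neg (by omega), show 2 + j + 1 = 2 + (j + 1) by ring, hV j (by omega),
        hV (j + 1) (by omega)]
      field_simp
      ring
  · rw [hV m le_rfl, hV1]
    field_simp
    ring

end Recursion

/-- The cyclic rotation system of the desirable-task model has a unique
solution, given in closed form.  Indices `1, …, n` are paper indices. -/
theorem stmt_12 (n : ℕ) (hn : 2 ≤ n) (p δ r : ℝ)
    (hp : p ∈ Set.Ioo (0 : ℝ) 1) (hδ : δ ∈ Set.Ioo (0 : ℝ) 1)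
    (ξ : ℝ) (hξ : ξ = (1 - δ * p) / (δ * (1 - p))) :
    1 < ξ ∧
    ∀ V : ℕ → ℝ,
      ((∀ k, 1 ≤ k → k ≤ n - 1 →
          V k = (1 - δ) * (if k = 1 then (0 : ℝ) else r)
              + δ * (p * V k + (1 - p) * V (k + 1))) ∧
        V n = (1 - δ) * r + δ * (p * V n + (1 - p) * V 1))
      ↔ (V 1 = r * (ξ ^ (n - 1) - 1) / (ξ ^ n - 1) ∧
          ∀ k, 2 ≤ k → k ≤ n →
            V k = r * (1 - (ξ - 1) * ξ ^ (k - 2) / (ξ ^ n - 1))) := by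
  have hB : δ * (1 - p) ≠ 0 := (mul_pos hδ.1 (sub_pos.mpr hp.2)).ne'
  have hξB : ξ * (δ * (1 - p)) = 1 - δ * p := by rw [hξ, div_mul_cancel₀ _ hB]
  have hξ1 : 1 < ξ := hξ ▸ one_lt_one_sub_mul_div_mul_one_sub hp hδ
  have hξn : ξ ^ n ≠ 1 := (one_lt_pow₀ hξ1 (by omega)).ne'
  refine ⟨hξ1, fun V => ?_⟩
  simp only [bellman_eq_iff hB hξB]
  exact ⟨fun h => rotation_values_of_system hn hξn h.1 h.2,
    fun h => system_of_rotation_values hn hξn h.1 h.2⟩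
end

section
/- Let n ≥ 2 be an integer and let p ∈ (0,1), δ ∈ (0,1), r < 0. Set ξ = (1−δp)/(δ(1−p)) and define V^1 = r(ξ^{n−1}−1)/(ξ^n−1) and V^k = r(1 − (ξ−1)ξ^{k−2}/(ξ^n−1)) for k = 2,…,n. Then r < V^2 < V^3 < ⋯ < V^n < V^1 < 0; that is, V^2 > r, V^k < V^{k+1} for each k = 2,…,n−1, V^n < V^1, and V^1 < 0. -/
/-!
Write `D = ξ ^ n - 1` and `f j = r * (1 - (ξ - 1) * ξ ^ j / D)`, so that `V k = f (k - 2)`.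
A short computation shows that `V 1 = f (n - 1)` as well: the selected worker's payoff is the next
term of the same sequence, as the cyclic rotation suggests. Since `ξ > 1` and `r < 0`, `f` is
strictly increasing, which gives the whole chain except its two ends; `f 0 > r` and
`f (n - 1) = r * (ξ ^ (n - 1) - 1) / D < 0` are immediate.
-/

lemma one_lt_one_sub_mul_div_mul_one_sub_s14 {p δ : ℝ} (hp : p < 1) (hδ₀ : 0 < δ) (hδ₁ : δ < 1) :
    1 < (1 - δ * p) / (δ * (1 - p)) := by
  have hpos : 0 < δ * (1 - p) := mul_pos hδ₀ (sub_pos.2 hp)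
  rw [one_lt_div hpos]
  linarith

noncomputable def rotationPayoff (r ξ : ℝ) (n j : ℕ) : ℝ :=
  r * (1 - (ξ - 1) * ξ ^ j / (ξ ^ n - 1))

namespace rotationPayoff

variable {r ξ : ℝ} {n : ℕ}

lemma strictMono (hr : r < 0) (hξ : 1 < ξ) (hn : n ≠ 0) : StrictMono (rotationPayoff r ξ n) := by
  intro i j hij
  have hD : 0 < ξ ^ n - 1 := sub_pos.2 (one_lt_pow₀ hξ hn)
  have hshare : (ξ - 1) * ξ ^ i / (ξ ^ n - 1) < (ξ - 1) * ξ ^ j / (ξ ^ n - 1) := by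
    have : ξ ^ i < ξ ^ j := pow_lt_pow_right₀ hξ hij
    gcongr
  unfold rotationPayoff
  nlinarith

lemma lt_apply_zero (hr : r < 0) (hξ : 1 < ξ) (hn : n ≠ 0) : r < rotationPayoff r ξ n 0 := by
  have hD : 0 < ξ ^ n - 1 := sub_pos.2 (one_lt_pow₀ hξ hn)
  have hshare : 0 < (ξ - 1) * ξ ^ 0 / (ξ ^ n - 1) := by
    rw [pow_zero, mul_one]
    exact div_pos (sub_pos.2 hξ) hD
  unfold rotationPayoff
  nlinarith

lemma apply_eq_div (m : ℕ) (hD : ξ ^ (m + 1) - 1 ≠ 0) :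
    rotationPayoff r ξ (m + 1) m = r * (ξ ^ m - 1) / (ξ ^ (m + 1) - 1) := by
  unfold rotationPayoff
  field_simp
  ring

lemma apply_neg (hr : r < 0) (hξ : 1 < ξ) {m : ℕ} (hm : m ≠ 0) :
    rotationPayoff r ξ (m + 1) m < 0 := by
  have hD : 0 < ξ ^ (m + 1) - 1 := sub_pos.2 (one_lt_pow₀ hξ m.succ_ne_zero)
  rw [apply_eq_div m hD.ne']
  exact div_neg_of_neg_of_pos (mul_neg_of_neg_of_pos hr (sub_pos.2 (one_lt_pow₀ hξ hm))) hD

end rotationPayoff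

/-- Ordering of the closed-form solution of the desirable-task cyclic rotation
system with `r < 0`: `r < V² < V³ < ⋯ < Vⁿ < V¹ < 0`. -/
theorem stmt_14 (n : ℕ) (hn : 2 ≤ n) (p δ r : ℝ)
    (hp : p ∈ Set.Ioo (0 : ℝ) 1) (hδ : δ ∈ Set.Ioo (0 : ℝ) 1) (hr : r < 0)
    (ξ : ℝ) (hξ : ξ = (1 - δ * p) / (δ * (1 - p)))
    (V : ℕ → ℝ)
    (hV1 : V 1 = r * (ξ ^ (n - 1) - 1) / (ξ ^ n - 1))
    (hVk : ∀ k, 2 ≤ k → k ≤ n →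
        V k = r * (1 - (ξ - 1) * ξ ^ (k - 2) / (ξ ^ n - 1))) :
    r < V 2 ∧
    (∀ k, 2 ≤ k → k ≤ n - 1 → V k < V (k + 1)) ∧
    V n < V 1 ∧ V 1 < 0 := by
  have hξ1 : 1 < ξ := hξ ▸ one_lt_one_sub_mul_div_mul_one_sub_s14 hp.2 hδ.1 hδ.2
  obtain ⟨m, rfl⟩ : ∃ m, n = m + 2 := ⟨n - 2, by omega⟩
  have hmono := rotationPayoff.strictMono hr hξ1 (m + 1).succ_ne_zero
  have hVk' : ∀ k, 2 ≤ k → k ≤ m + 2 → V k = rotationPayoff r ξ (m + 2) (k - 2) := hVk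
  have hV1' : V 1 = rotationPayoff r ξ (m + 2) (m + 1) := by
    rw [hV1, rotationPayoff.apply_eq_div (m + 1) (sub_pos.2 (one_lt_pow₀ hξ1 (by omega))).ne']
    rfl
  refine ⟨?_, fun k hk2 hkn => ?_, ?_, ?_⟩
  · rw [hVk' 2 le_rfl hn]
    exact rotationPayoff.lt_apply_zero hr hξ1 (by omega)
  · rw [hVk' k hk2 (by omega), hVk' (k + 1) (by omega) (by omega)]
    exact hmono (by omega)
  · rw [hVk' (m + 2) hn le_rfl, hV1']
    exact hmono (by omega)
  · rw [hV1']
    exact rotationPayoff.apply_neg hr hξ1 m.succ_ne_zero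
end

section
/- Let p ∈ (0,1), δ ∈ (0,1), and r > 0. Consider the two linear systems: (i) the uniform-shift system in unknowns (U_S, U_R) given by U_S = δ(p·U_R + (1−p)·U_S) and U_R = (1−δ)r + δ((p/2)·U_S + (1 − p/2)·U_R); and (ii) the rotation system in unknowns (W_S, W_{R,1}, W_{R,2}) given by W_S = δ(p·W_{R,2} + (1−p)·W_S), W_{R,2} = (1−δ)r + δ(p·W_{R,1} + (1−p)·W_{R,2}), and W_{R,1} = (1−δ)r + δ(p·W_S + (1−p)·W_{R,1}). Each system has a unique solution, and these solutions satisfy W_{R,2} − W_S > U_R − U_S. -/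
/-- With three workers, both the uniform-shift system (unknowns `(U_S, U_R)`)
and the rotation system (unknowns `(W_S, W_{R,1}, W_{R,2})`) have unique
solutions, and rotation yields a strictly larger incentive gap:
`W_{R,2} − W_S > U_R − U_S`. -/
theorem stmt_15 (p δ r : ℝ)
    (hp : p ∈ Set.Ioo (0 : ℝ) 1) (hδ : δ ∈ Set.Ioo (0 : ℝ) 1) (hr : 0 < r) :
    (∃! u : ℝ × ℝ,
        u.1 = δ * (p * u.2 + (1 - p) * u.1) ∧
        u.2 = (1 - δ) * r + δ * ((p / 2) * u.1 + (1 - p / 2) * u.2)) ∧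
    (∃! w : ℝ × ℝ × ℝ,
        w.1 = δ * (p * w.2.2 + (1 - p) * w.1) ∧
        w.2.2 = (1 - δ) * r + δ * (p * w.2.1 + (1 - p) * w.2.2) ∧
        w.2.1 = (1 - δ) * r + δ * (p * w.1 + (1 - p) * w.2.1)) ∧
    (∀ u : ℝ × ℝ, ∀ w : ℝ × ℝ × ℝ,
        (u.1 = δ * (p * u.2 + (1 - p) * u.1) ∧
          u.2 = (1 - δ) * r + δ * ((p / 2) * u.1 + (1 - p / 2) * u.2)) →
        (w.1 = δ * (p * w.2.2 + (1 - p) * w.1) ∧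
          w.2.2 = (1 - δ) * r + δ * (p * w.2.1 + (1 - p) * w.2.2) ∧
          w.2.1 = (1 - δ) * r + δ * (p * w.1 + (1 - p) * w.2.1)) →
        u.2 - u.1 < w.2.2 - w.1) := by
  obtain ⟨hp1, hp2⟩ := hp
  obtain ⟨hδ1, hδ2⟩ := hδ
  have h1δ : (0:ℝ) < 1 - δ := by linarith
  have hb : (0:ℝ) < δ * p := mul_pos hδ1 hp1
  have hA : (0:ℝ) < 1 - δ + δ * p := by linarith
  have hD1 : (0:ℝ) < 2 - 2*δ + 3*(δ*p) := by nlinarith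
  have hD2 : (0:ℝ) < (1-δ+δ*p)^2 + (1-δ+δ*p)*(δ*p) + (δ*p)^2 := by nlinarith
  have hD1' : (2 - 2*δ + 3*(δ*p)) ≠ 0 := ne_of_gt hD1
  have hD2' : ((1-δ+δ*p)^2 + (1-δ+δ*p)*(δ*p) + (δ*p)^2) ≠ 0 := ne_of_gt hD2
  have h1δ' : (1 - δ) ≠ 0 := ne_of_gt h1δ
  -- solver for system (i)
  have solve1 : ∀ x y : ℝ, x = δ * (p * y + (1 - p) * x) →
      y = (1 - δ) * r + δ * ((p / 2) * x + (1 - p / 2) * y) →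
      x = 2*(δ*p)*r / (2 - 2*δ + 3*(δ*p)) ∧
      y = 2*(1-δ+δ*p)*r / (2 - 2*δ + 3*(δ*p)) := by
    intro x y h1 h2
    have k1 : (1-δ) * ((2 - 2*δ + 3*(δ*p))*x - 2*(δ*p)*r) = 0 := by
      linear_combination (2 - 2*δ + δ*p) * h1 + 2*(δ*p) * h2
    have k2 : (1-δ) * ((2 - 2*δ + 3*(δ*p))*y - 2*(1-δ+δ*p)*r) = 0 := by
      linear_combination (δ*p) * h1 + (2 - 2*δ + 2*(δ*p)) * h2
    have k1' := (mul_eq_zero.mp k1).resolve_left h1δ'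
    have k2' := (mul_eq_zero.mp k2).resolve_left h1δ'
    constructor
    · field_simp
      linarith
    · field_simp
      linarith
  -- solver for system (ii)
  have solve2 : ∀ x y z : ℝ, x = δ * (p * z + (1 - p) * x) →
      z = (1 - δ) * r + δ * (p * y + (1 - p) * z) →
      y = (1 - δ) * r + δ * (p * x + (1 - p) * y) →
      x = (δ*p)*((1-δ+δ*p)+(δ*p))*r / ((1-δ+δ*p)^2 + (1-δ+δ*p)*(δ*p) + (δ*p)^2) ∧
      y = ((1-δ+δ*p)^2+(δ*p)^2)*r / ((1-δ+δ*p)^2 + (1-δ+δ*p)*(δ*p) + (δ*p)^2) ∧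
      z = (1-δ+δ*p)*((1-δ+δ*p)+(δ*p))*r / ((1-δ+δ*p)^2 + (1-δ+δ*p)*(δ*p) + (δ*p)^2) := by
    intro x y z h1 h2 h3
    have kx : (1-δ) * (((1-δ+δ*p)^2 + (1-δ+δ*p)*(δ*p) + (δ*p)^2)*x
        - (δ*p)*((1-δ+δ*p)+(δ*p))*r) = 0 := by
      linear_combination (1-δ+δ*p)^2 * h1 + (1-δ+δ*p)*(δ*p) * h2 + (δ*p)^2 * h3
    have ky : (1-δ) * (((1-δ+δ*p)^2 + (1-δ+δ*p)*(δ*p) + (δ*p)^2)*y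
        - ((1-δ+δ*p)^2+(δ*p)^2)*r) = 0 := by
      linear_combination (1-δ+δ*p)*(δ*p) * h1 + (δ*p)^2 * h2 + (1-δ+δ*p)^2 * h3
    have kz : (1-δ) * (((1-δ+δ*p)^2 + (1-δ+δ*p)*(δ*p) + (δ*p)^2)*z
        - (1-δ+δ*p)*((1-δ+δ*p)+(δ*p))*r) = 0 := by
      linear_combination (δ*p)^2 * h1 + (1-δ+δ*p)^2 * h2 + (1-δ+δ*p)*(δ*p) * h3
    have kx' := (mul_eq_zero.mp kx).resolve_left h1δ'
    have ky' := (mul_eq_zero.mp ky).resolve_left h1δ'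
    have kz' := (mul_eq_zero.mp kz).resolve_left h1δ'
    refine ⟨?_, ?_, ?_⟩ <;> · field_simp; linarith
  refine ⟨⟨(2*(δ*p)*r / (2 - 2*δ + 3*(δ*p)), 2*(1-δ+δ*p)*r / (2 - 2*δ + 3*(δ*p))),
      ⟨by field_simp; ring, by field_simp; ring⟩, ?_⟩,
    ⟨((δ*p)*((1-δ+δ*p)+(δ*p))*r / ((1-δ+δ*p)^2 + (1-δ+δ*p)*(δ*p) + (δ*p)^2),
      ((1-δ+δ*p)^2+(δ*p)^2)*r / ((1-δ+δ*p)^2 + (1-δ+δ*p)*(δ*p) + (δ*p)^2),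
      (1-δ+δ*p)*((1-δ+δ*p)+(δ*p))*r / ((1-δ+δ*p)^2 + (1-δ+δ*p)*(δ*p) + (δ*p)^2)),
      ⟨by field_simp; ring, by field_simp; ring, by field_simp; ring⟩, ?_⟩, ?_⟩
  · rintro ⟨x, y⟩ ⟨h1, h2⟩
    obtain ⟨hx, hy⟩ := solve1 x y h1 h2
    exact Prod.ext hx hy
  · rintro ⟨x, y, z⟩ ⟨h1, h2, h3⟩
    obtain ⟨hx, hy, hz⟩ := solve2 x y z h1 h2 h3
    exact Prod.ext hx (Prod.ext hy hz)
  · rintro ⟨x, y⟩ ⟨xw, yw, zw⟩ ⟨h1, h2⟩ ⟨g1, g2, g3⟩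
    obtain ⟨hx, hy⟩ := solve1 x y h1 h2
    obtain ⟨gx, gy, gz⟩ := solve2 xw yw zw g1 g2 g3
    simp only at hx hy gx gy gz ⊢
    rw [hx, hy, gx, gz, div_sub_div_same, div_sub_div_same, div_lt_div_iff₀ hD1 hD2]
    nlinarith [mul_pos hr (mul_pos (mul_pos h1δ h1δ) hb),
      mul_pos (mul_pos hr h1δ) hb, mul_pos h1δ hb]
end

section
/- Let n ≥ 2 be an integer, let 0 < q < p < 1, δ ∈ (0,1), r < 0, and s > 0. For α ∈ (0,1] set ξ_α = (1−δ(1−α(1−p)))/(δα(1−p)) and define g(α) = α·(−r)·(ξ_α−1)(ξ_α^{n−1}−1)/(ξ_α^n−1). If g(1) ≥ (1−δ)s/(δ(p−q)), then g is strictly increasing on (0,1] and there exists a unique α* ∈ (0,1] such that g(α*) = (1−δ)s/(δ(p−q)). -/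
private lemma sum_lem (m : ℕ) (hm : 1 ≤ m) {x y : ℝ} (hx : 1 < x) (hxy : x < y) :
    (∑ k ∈ Finset.range m, y ^ k) * x ^ m < (∑ k ∈ Finset.range m, x ^ k) * y ^ m := by
  rw [Finset.sum_mul, Finset.sum_mul]
  apply Finset.sum_lt_sum_of_nonempty (Finset.nonempty_range_iff.mpr (by omega))
  intro k hk
  have hkm : k < m := Finset.mem_range.mp hk
  have hx0 : (0:ℝ) < x := by linarith
  have hy0 : (0:ℝ) < y := by linarith
  have ex : x ^ k * x ^ (m - k) = x ^ m := by rw [← pow_add]; congr 1; omega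
  have ey : y ^ k * y ^ (m - k) = y ^ m := by rw [← pow_add]; congr 1; omega
  have e1 : y ^ k * x ^ m = (x ^ k * y ^ k) * x ^ (m - k) := by rw [← ex]; ring
  have e2 : x ^ k * y ^ m = (x ^ k * y ^ k) * y ^ (m - k) := by rw [← ey]; ring
  rw [e1, e2]
  apply mul_lt_mul_of_pos_left _ (by positivity)
  exact pow_lt_pow_left₀ hxy (by linarith) (by omega)

private lemma key_lem (m : ℕ) (hm : 1 ≤ m) {x y : ℝ} (hx : 1 < x) (hxy : x < y) :
    (y ^ m - 1) * (x ^ (m + 1) - 1) < (x ^ m - 1) * (y ^ (m + 1) - 1) := by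
  have hy : 1 < y := hx.trans hxy
  have hTS : (∑ k ∈ Finset.range m, y ^ k) * (∑ k ∈ Finset.range (m+1), x ^ k)
      < (∑ k ∈ Finset.range m, x ^ k) * (∑ k ∈ Finset.range (m+1), y ^ k) := by
    rw [Finset.sum_range_succ, Finset.sum_range_succ]
    have := sum_lem m hm hx hxy
    nlinarith [this]
  have gx : (∑ k ∈ Finset.range (m+1), x ^ k) * (x - 1) = x ^ (m+1) - 1 := geom_sum_mul x (m+1)
  have gy : (∑ k ∈ Finset.range (m+1), y ^ k) * (y - 1) = y ^ (m+1) - 1 := geom_sum_mul y (m+1)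
  have gx' : (∑ k ∈ Finset.range m, x ^ k) * (x - 1) = x ^ m - 1 := geom_sum_mul x m
  have gy' : (∑ k ∈ Finset.range m, y ^ k) * (y - 1) = y ^ m - 1 := geom_sum_mul y m
  rw [← gx, ← gy, ← gx', ← gy']
  calc ((∑ k ∈ Finset.range m, y ^ k) * (y - 1)) * ((∑ k ∈ Finset.range (m+1), x ^ k) * (x - 1))
      = ((∑ k ∈ Finset.range m, y ^ k) * (∑ k ∈ Finset.range (m+1), x ^ k)) * ((x-1)*(y-1)) := by ring
    _ < ((∑ k ∈ Finset.range m, x ^ k) * (∑ k ∈ Finset.range (m+1), y ^ k)) * ((x-1)*(y-1)) := by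
        exact mul_lt_mul_of_pos_right hTS (mul_pos (by linarith) (by linarith))
    _ = ((∑ k ∈ Finset.range m, x ^ k) * (x - 1)) * ((∑ k ∈ Finset.range (m+1), y ^ k) * (y - 1)) := by ring

private lemma hdec_lem (m : ℕ) (hm : 1 ≤ m) {x y : ℝ} (hx : 1 < x) (hxy : x < y) :
    (y ^ m - 1) / (y ^ (m + 1) - 1) < (x ^ m - 1) / (x ^ (m + 1) - 1) := by
  have hy : 1 < y := hx.trans hxy
  have hxp : (1:ℝ) < x ^ (m+1) := one_lt_pow₀ hx (by omega)
  have hyp : (1:ℝ) < y ^ (m+1) := one_lt_pow₀ hy (by omega)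
  rw [div_lt_div_iff₀ (by linarith) (by linarith)]
  exact key_lem m hm hx hxy

/-- Desirable-task model: if `g(1) ≥ (1−δ)s/(δ(p−q))`, then the incentive gap
`g(α) = α(V¹−V²)` under an `α`-rotating rule is strictly increasing on `(0,1]`
and binds at a unique `α* ∈ (0,1]`. -/
theorem stmt_16 (n : ℕ) (hn : 2 ≤ n) (p q δ r s : ℝ)
    (hq : 0 < q) (hqp : q < p) (hp : p < 1)
    (hδ : δ ∈ Set.Ioo (0 : ℝ) 1) (hr : r < 0) (hs : 0 < s)
    (ξ : ℝ → ℝ)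
    (hξ : ∀ α, ξ α = (1 - δ * (1 - α * (1 - p))) / (δ * (α * (1 - p))))
    (g : ℝ → ℝ)
    (hg : ∀ α, g α = α * (-r) * (ξ α - 1) * ((ξ α) ^ (n - 1) - 1) / ((ξ α) ^ n - 1))
    (heff : (1 - δ) * s / (δ * (p - q)) ≤ g 1) :
    (∀ α α' : ℝ, 0 < α → α < α' → α' ≤ 1 → g α < g α') ∧
    (∃! α : ℝ, α ∈ Set.Ioc (0 : ℝ) 1 ∧ g α = (1 - δ) * s / (δ * (p - q))) := by
  obtain ⟨hδ0, hδ1⟩ := hδ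
  have h1p : (0:ℝ) < 1 - p := by linarith
  have h1δ : (0:ℝ) < 1 - δ := by linarith
  have hrpos : (0:ℝ) < -r := by linarith
  have hKpos : (0:ℝ) < (-r) * (1 - δ) / (δ * (1 - p)) :=
    div_pos (mul_pos hrpos h1δ) (mul_pos hδ0 h1p)
  -- ξ α - 1 identity
  have hsub : ∀ α : ℝ, 0 < α → ξ α - 1 = (1 - δ) / (δ * (α * (1 - p))) := by
    intro α hα
    have hd : δ * (α * (1 - p)) ≠ 0 := by positivity
    rw [hξ]
    field_simp
    ring
  have hξgt : ∀ α : ℝ, 0 < α → 1 < ξ α := by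
    intro α hα
    have h := hsub α hα
    have : (0:ℝ) < (1 - δ) / (δ * (α * (1 - p))) := div_pos h1δ (by positivity)
    linarith
  -- rewrite of g
  have hgK : ∀ α : ℝ, 0 < α →
      g α = ((-r) * (1 - δ) / (δ * (1 - p))) * (((ξ α) ^ (n-1) - 1) / ((ξ α) ^ n - 1)) := by
    intro α hα
    have hx := hξgt α hα
    have hB : (ξ α) ^ n - 1 ≠ 0 := sub_ne_zero_of_ne (ne_of_gt (one_lt_pow₀ hx (by omega)))
    rw [hg, hsub α hα]
    have hd : δ * (α * (1 - p)) ≠ 0 := by positivity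
    field_simp
  -- strict monotonicity
  have hmono : ∀ α α' : ℝ, 0 < α → α < α' → α' ≤ 1 → g α < g α' := by
    intro α α' hα hαα' h1
    have hα' : 0 < α' := hα.trans hαα'
    have hx : 1 < ξ α' := hξgt α' hα'
    have hxy : ξ α' < ξ α := by
      have e := hsub α hα
      have e' := hsub α' hα'
      have : (1 - δ) / (δ * (α' * (1 - p))) < (1 - δ) / (δ * (α * (1 - p))) := by
        apply div_lt_div_of_pos_left h1δ (by positivity)
        nlinarith [mul_pos (mul_pos hδ0 h1p) (sub_pos.mpr hαα')]
      linarith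
    rw [hgK α hα, hgK α' hα']
    apply mul_lt_mul_of_pos_left _ hKpos
    have := hdec_lem (n-1) (by omega) hx hxy
    rwa [show n - 1 + 1 = n by omega] at this
  -- bound g α ≤ (-r) * α
  have hbound : ∀ α : ℝ, 0 < α → g α ≤ (-r) * α := by
    intro α hα
    rw [hgK α hα]
    have hx : 1 < ξ α := hξgt α hα
    have hxm : 1 < (ξ α) ^ (n-1) := one_lt_pow₀ hx (by omega)
    have hxn : 1 < (ξ α) ^ n := one_lt_pow₀ hx (by omega)
    have e : (ξ α) ^ n = (ξ α) ^ (n-1) * ξ α := by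
      rw [← pow_succ]; congr 1; omega
    have h1 : ((ξ α) ^ (n-1) - 1) / ((ξ α) ^ n - 1) ≤ 1 / (ξ α - 1) := by
      rw [div_le_div_iff₀ (by linarith) (by linarith)]
      nlinarith
    calc ((-r) * (1 - δ) / (δ * (1 - p))) * (((ξ α) ^ (n-1) - 1) / ((ξ α) ^ n - 1))
        ≤ ((-r) * (1 - δ) / (δ * (1 - p))) * (1 / (ξ α - 1)) :=
          mul_le_mul_of_nonneg_left h1 hKpos.le
      _ = (-r) * α := by
          rw [hsub α hα]
          have hd : δ * (α * (1 - p)) ≠ 0 := by positivity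
          field_simp
  -- target value
  set c : ℝ := (1 - δ) * s / (δ * (p - q)) with hc
  have hpq : (0:ℝ) < p - q := by linarith
  have hcpos : 0 < c := div_pos (mul_pos h1δ hs) (mul_pos hδ0 hpq)
  set α₀ : ℝ := min 1 (c / (2 * (-r))) with hα₀def
  have h0 : 0 < α₀ := lt_min one_pos (by positivity)
  have h01 : α₀ ≤ 1 := min_le_left _ _
  have hga0 : g α₀ < c := by
    have h1 : g α₀ ≤ (-r) * α₀ := hbound α₀ h0
    have h2 : (-r) * α₀ ≤ (-r) * (c / (2 * (-r))) :=
      mul_le_mul_of_nonneg_left (min_le_right _ _) hrpos.le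
    have hrne : r ≠ 0 := ne_of_lt hr
    have h3 : (-r) * (c / (2 * (-r))) = c / 2 := by
      field_simp
    linarith [half_lt_self hcpos]
  -- continuity
  have hcont : ContinuousOn g (Set.Icc α₀ 1) := by
    have hgf : g = fun α => α * (-r) * (ξ α - 1) * ((ξ α) ^ (n - 1) - 1) / ((ξ α) ^ n - 1) :=
      funext hg
    have hξf : ξ = fun α => (1 - δ * (1 - α * (1 - p))) / (δ * (α * (1 - p))) := funext hξ
    have hcξ : ContinuousOn ξ (Set.Icc α₀ 1) := by
      rw [hξf]
      apply ContinuousOn.div (by fun_prop) (by fun_prop)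
      intro a ha
      have : 0 < a := lt_of_lt_of_le h0 ha.1
      positivity
    rw [hgf]
    apply ContinuousOn.div
    · exact (((continuousOn_id.mul continuousOn_const).mul
        (hcξ.sub continuousOn_const)).mul ((hcξ.pow _).sub continuousOn_const))
    · exact (hcξ.pow n).sub continuousOn_const
    · intro a ha
      have hx := hξgt a (lt_of_lt_of_le h0 ha.1)
      exact sub_ne_zero_of_ne (ne_of_gt (one_lt_pow₀ hx (by omega)))
  have hsubset := intermediate_value_Icc h01 hcont
  obtain ⟨a, ha, hga⟩ := hsubset ⟨hga0.le, heff⟩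
  have ha0 : 0 < a := lt_of_lt_of_le h0 ha.1
  refine ⟨hmono, a, ⟨⟨ha0, ha.2⟩, hga⟩, ?_⟩
  rintro b ⟨⟨hb0, hb1⟩, hgb⟩
  rcases lt_trichotomy b a with h | h | h
  · have := hmono b a hb0 h ha.2
    rw [hgb, hga] at this
    exact absurd this (lt_irrefl c)
  · exact h
  · have := hmono a b ha0 h hb1
    rw [hgb, hga] at this
    exact absurd this (lt_irrefl c)
end
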